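/- Define Φ : ℝ × ℝ_{>0} × (1, ∞) × ℝ_{>0} → ℝ × ℝ_{>0} × ℝ_{>0} by Φ(γ, ν, α, β) = (γ, β(1+ν)/(να), 2α), mapping normal-inverse-Gamma parameters to the (location, scale, degrees-of-freedom) parameters of the induced Student's-t predictive distribution. Then Φ is not injective: for every (γ, ν, α, β) in the domain there exists (γ', ν', α', β') ≠ (γ, ν, α, β) in the domain with Φ(γ', ν', α', β') = Φ(γ, ν, α, β). In particular, for any ν' ≠ ν one may take β' = β(1+ν)ν'/(ν(1+ν')) with γ' = γ and α' = α. -/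

import Mathlib

/-- The map from normal-inverse-Gamma parameters `(γ, ν, α, β)` to the
(location, scale, degrees-of-freedom) parameters `(γ, β(1+ν)/(να), 2α)` of the induced
Student's-t predictive distribution. -/
noncomputable def nigToStudentT (p : ℝ × ℝ × ℝ × ℝ) : ℝ × ℝ × ℝ :=
  (p.1, p.2.2.2 * (1 + p.2.1) / (p.2.1 * p.2.2.1), 2 * p.2.2.1)

lemma nig_key (γ ν α β : ℝ) (hν : 0 < ν) (hα : 1 < α) (hβ : 0 < β)
    (ν' : ℝ) (hν' : 0 < ν') :
    nigToStudentT (γ, ν', α, β * (1 + ν) * ν' / (ν * (1 + ν')))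
      = nigToStudentT (γ, ν, α, β) := by
  simp only [nigToStudentT, Prod.mk.injEq]
  refine ⟨trivial, ?_, trivial⟩
  have hα0 : α ≠ 0 := by linarith
  have h1 : (1 : ℝ) + ν ≠ 0 := by linarith
  have h2 : (1 : ℝ) + ν' ≠ 0 := by linarith
  field_simp

/-- **Non-injectivity of the NIG-to-Student's-t predictive map.** For every
`(γ, ν, α, β)` with `ν > 0`, `α > 1`, `β > 0` there exists a different parameter tuple
`(γ', ν', α', β')` in the domain with the same image; in particular, for any `ν' ≠ ν`
(`ν' > 0`) one may take `γ' = γ`, `α' = α` and `β' = β(1+ν)ν'/(ν(1+ν'))`. -/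
theorem nigToStudentT_not_injective :
    (∀ γ ν α β : ℝ, 0 < ν → 1 < α → 0 < β →
      ∃ γ' ν' α' β' : ℝ, 0 < ν' ∧ 1 < α' ∧ 0 < β' ∧
        (γ', ν', α', β') ≠ (γ, ν, α, β) ∧
        nigToStudentT (γ', ν', α', β') = nigToStudentT (γ, ν, α, β)) ∧
    (∀ γ ν α β : ℝ, 0 < ν → 1 < α → 0 < β → ∀ ν' : ℝ, 0 < ν' → ν' ≠ ν →
      nigToStudentT (γ, ν', α, β * (1 + ν) * ν' / (ν * (1 + ν')))
        = nigToStudentT (γ, ν, α, β)) := by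
  constructor
  · intro γ ν α β hν hα hβ
    refine ⟨γ, ν + 1, α, β * (1 + ν) * (ν + 1) / (ν * (1 + (ν + 1))), by linarith, hα, ?_, ?_, ?_⟩
    · positivity
    · intro h
      have := congrArg (fun p => p.2.1) h
      simp at this
    · exact nig_key γ ν α β hν hα hβ (ν + 1) (by linarith)
  · intro γ ν α β hν hα hβ ν' hν' _
    exact nig_key γ ν α β hν hα hβ ν' hν'
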